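/- Let p be a prime and m ≥ 1 an integer, and set n = p^m. Then the independent domination polynomial of the comaximal graph Γ(ℤ_n) is D_i(Γ(ℤ_n), x) = (p^m − p^{m−1})·x + x^{p^{m−1}} (which equals p·x when m = 1). -/

import Mathlib

open Polynomial

/-- The comaximal graph of `ℤ/nℤ`: distinct `a, b` are adjacent iff the ideal
generated by `a` and `b` is the whole ring. -/
def comaximalGraph (n : ℕ) : SimpleGraph (ZMod n) where
  Adj a b := a ≠ b ∧ Ideal.span ({a, b} : Set (ZMod n)) = ⊤
  symm := by
    constructor
    rintro a b ⟨hab, h⟩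
    refine ⟨hab.symm, ?_⟩
    rwa [Set.pair_comm]
  loopless := by
    constructor
    rintro a ⟨h, -⟩
    exact h rfl

/-- `S` is an independent dominating set of `G`. -/
def IsIndepDomSet {V : Type*} (G : SimpleGraph V) (S : Finset V) : Prop :=
  (∀ a ∈ S, ∀ b ∈ S, ¬ G.Adj a b) ∧ ∀ v : V, v ∉ S → ∃ u ∈ S, G.Adj u v

/-- The independent domination polynomial `D_i(G, x) = Σ_k d_i(G,k) x^k`. -/
noncomputable def indepDomPoly {V : Type*} (G : SimpleGraph V) : Polynomial ℝ :=
  ∑ k ∈ Finset.range (Nat.card V + 1),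
    Polynomial.C ((Nat.card {S : Finset V // IsIndepDomSet G S ∧ S.card = k}) : ℝ) *
      Polynomial.X ^ k

/-- The independence polynomial `I(G, x) = Σ_k c_k x^k`. -/
noncomputable def indepPoly {V : Type*} (G : SimpleGraph V) : Polynomial ℝ :=
  ∑ k ∈ Finset.range (Nat.card V + 1),
    Polynomial.C ((Nat.card {S : Finset V //
        (∀ a ∈ S, ∀ b ∈ S, ¬ G.Adj a b) ∧ S.card = k}) : ℝ) *
      Polynomial.X ^ k

/-! `ZMod (p ^ m)` is a local ring, so two elements generate the unit ideal iff one of them is a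
unit: `Γ(ℤ_n)` is the join of the clique on the units with the independent set of non-units.
An independent dominating set containing a unit is therefore that unit alone, and one without
units must contain every non-unit. Hence `D_i = φ(n) x + x ^ (n - φ(n))`. -/

open Finset
open scoped Nat

theorem Ideal.span_pair_eq_top_iff_of_isLocalRing {R : Type*} [CommRing R] [IsLocalRing R]
    {a b : R} : Ideal.span {a, b} = ⊤ ↔ IsUnit a ∨ IsUnit b := by
  refine ⟨fun h => ?_, ?_⟩
  · obtain ⟨x, y, hxy⟩ := Ideal.mem_span_pair.mp (h ▸ Submodule.mem_top : (1 : R) ∈ _)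
    exact (IsLocalRing.isUnit_or_isUnit_of_isUnit_add (hxy ▸ isUnit_one)).imp
      isUnit_of_mul_isUnit_right isUnit_of_mul_isUnit_right
  · rintro (h | h)
    · exact Ideal.eq_top_of_isUnit_mem _ (Ideal.subset_span (Set.mem_insert a _)) h
    · exact Ideal.eq_top_of_isUnit_mem _ (Ideal.subset_span (Set.mem_insert_of_mem _ rfl)) h

theorem card_filter_not_isUnit (M : Type*) [CommMonoid M] [Fintype M] [DecidableEq M]
    [DecidablePred (IsUnit : M → Prop)] :
    #{a : M | ¬IsUnit a} = Fintype.card M - Fintype.card Mˣ := by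
  have hunits : ({a : M | IsUnit a} : Finset M) = univ.map ⟨Units.val, Units.val_injective⟩ := by
    ext a
    simp [IsUnit, eq_comm]
  rw [filter_not, card_sdiff_of_subset (filter_subset _ _), hunits, card_map, Finset.card_univ,
    Finset.card_univ]

namespace ZMod

variable {p m : ℕ}

theorem isUnit_natCast_primePow_iff (hp : p.Prime) (hm : m ≠ 0) {k : ℕ} :
    IsUnit (k : ZMod (p ^ m)) ↔ ¬p ∣ k := by
  rw [isUnit_iff_coprime, Nat.coprime_pow_right_iff (Nat.pos_of_ne_zero hm), Nat.coprime_comm,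
    hp.coprime_iff_not_dvd]

theorem isLocalRing_primePow (hp : p.Prime) (hm : m ≠ 0) : IsLocalRing (ZMod (p ^ m)) := by
  have : Fact (1 < p ^ m) := ⟨Nat.one_lt_pow hm hp.one_lt⟩
  refine IsLocalRing.of_nonunits_add fun a b ha hb => ?_
  rw [← natCast_zmod_val a] at ha
  rw [← natCast_zmod_val b] at hb
  rw [mem_nonunits_iff, ← natCast_zmod_val a, ← natCast_zmod_val b, ← Nat.cast_add,
    isUnit_natCast_primePow_iff hp hm, not_not]
  rw [mem_nonunits_iff, isUnit_natCast_primePow_iff hp hm, not_not] at ha hb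
  exact dvd_add ha hb

end ZMod

theorem indepDomPoly_eq_sum {V : Type*} [Fintype V] (G : SimpleGraph V)
    [DecidablePred (IsIndepDomSet G)] :
    indepDomPoly G = ∑ S with IsIndepDomSet G S, X ^ #S := by
  have hcard : ∀ S ∈ ({S | IsIndepDomSet G S} : Finset (Finset V)),
      #S ∈ range (Fintype.card V + 1) :=
    fun S _ => mem_range_succ_iff.mpr (card_le_univ S)
  rw [indepDomPoly, Nat.card_eq_fintype_card, ← sum_fiberwise_of_maps_to hcard]
  refine sum_congr rfl fun k _ => ?_
  rw [sum_congr rfl fun S hS => by rw [(mem_filter.mp hS).2], sum_const, filter_filter,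
    Nat.card_eq_fintype_card, Fintype.card_subtype, nsmul_eq_mul, C_eq_natCast]

namespace comaximalGraph

variable {n : ℕ} [IsLocalRing (ZMod n)]

theorem adj_iff {a b : ZMod n} :
    (comaximalGraph n).Adj a b ↔ a ≠ b ∧ (IsUnit a ∨ IsUnit b) :=
  and_congr_right fun _ => Ideal.span_pair_eq_top_iff_of_isLocalRing

variable [NeZero n]

theorem isIndepDomSet_iff {S : Finset (ZMod n)} :
    IsIndepDomSet (comaximalGraph n) S ↔
      (∃ u : (ZMod n)ˣ, S = {(u : ZMod n)}) ∨ S = ({a | ¬IsUnit a} : Finset (ZMod n)) := by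
  constructor
  · rintro ⟨hind, hdom⟩
    by_cases hunit : ∃ u ∈ S, IsUnit u
    · obtain ⟨u, huS, hu⟩ := hunit
      refine .inl ⟨hu.unit, eq_singleton_iff_unique_mem.mpr ⟨huS, fun b hbS => ?_⟩⟩
      by_contra hbu
      exact hind u huS b hbS (adj_iff.mpr ⟨Ne.symm hbu, .inl hu⟩)
    · push Not at hunit
      refine .inr (ext fun a => ⟨fun ha => by simpa using hunit a ha, fun ha => ?_⟩)
      by_contra haS
      obtain ⟨u, huS, hua⟩ := hdom a haS
      exact (adj_iff.mp hua).2.elim (hunit u huS) (by simpa using ha)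
  · rintro (⟨u, rfl⟩ | rfl)
    · refine ⟨fun a ha b hb hab => ?_, fun v hv => ⟨u, mem_singleton_self _, ?_⟩⟩
      · rw [mem_singleton] at ha hb
        exact hab.ne (ha.trans hb.symm)
      · exact adj_iff.mpr ⟨Ne.symm (by simpa using hv), .inl u.isUnit⟩
    · refine ⟨fun a ha b hb hab => ?_, fun v hv => ⟨0, by simp, ?_⟩⟩
      · simp only [mem_filter, mem_univ, true_and] at ha hb
        exact (adj_iff.mp hab).2.elim ha hb
      · have hv : IsUnit v := by simpa using hv
        exact adj_iff.mpr ⟨fun h => not_isUnit_zero (h ▸ hv), .inr hv⟩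

theorem indepDomPoly_eq :
    indepDomPoly (comaximalGraph n) = C (φ n : ℝ) * X + X ^ (n - φ n) := by
  classical
  have hsets : ({S | IsIndepDomSet (comaximalGraph n) S} : Finset (Finset (ZMod n))) =
      insert ({a | ¬IsUnit a} : Finset (ZMod n)) (univ.map ⟨fun u : (ZMod n)ˣ => {(u : ZMod n)},
        singleton_injective.comp Units.val_injective⟩) := by
    ext S
    simp [isIndepDomSet_iff, or_comm, eq_comm]
  rw [indepDomPoly_eq_sum, hsets, sum_insert, sum_map, card_filter_not_isUnit, ZMod.card,
    ZMod.card_units_eq_totient, add_comm]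
  · simp only [Function.Embedding.coeFn_mk, card_singleton, pow_one, sum_const, card_univ,
      ZMod.card_units_eq_totient, nsmul_eq_mul, map_natCast]
  · simp only [mem_map, mem_univ, true_and, Function.Embedding.coeFn_mk, not_exists]
    intro u hu
    have hzero : (0 : ZMod n) ∈ ({(u : ZMod n)} : Finset (ZMod n)) := by simp [hu]
    exact not_isUnit_zero (mem_singleton.mp hzero ▸ u.isUnit)

end comaximalGraph

/-- For `n = p^m` with `p` prime and `m ≥ 1`,
`D_i(Γ(ℤ_n), x) = (p^m − p^(m−1))·x + x^(p^(m−1))`. -/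
theorem stmt_6 (p m : ℕ) (hp : p.Prime) (hm : 1 ≤ m) :
    indepDomPoly (comaximalGraph (p ^ m)) =
      Polynomial.C ((p ^ m - p ^ (m - 1) : ℕ) : ℝ) * Polynomial.X +
        Polynomial.X ^ (p ^ (m - 1)) := by
  have : IsLocalRing (ZMod (p ^ m)) := ZMod.isLocalRing_primePow hp (by omega)
  have : NeZero (p ^ m) := ⟨pow_ne_zero m hp.ne_zero⟩
  have htotient : φ (p ^ m) = p ^ m - p ^ (m - 1) := by
    obtain ⟨k, rfl⟩ := Nat.exists_eq_add_of_le' hm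
    rw [Nat.totient_prime_pow_succ hp, Nat.add_sub_cancel, Nat.mul_sub, mul_one, pow_succ]
  have hle : p ^ (m - 1) ≤ p ^ m := Nat.pow_le_pow_right hp.pos (Nat.sub_le m 1)
  rw [comaximalGraph.indepDomPoly_eq, htotient, Nat.sub_sub_self hle]
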